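/- arXiv:1203.2124 — 9 statements merged into one kernel-verified Lean document; each statement's English description precedes it below -/
import Mathlib

section
/- Let a = (a₁,a₂,a₃), b = (b₁,b₂,b₃) ∈ ℤ³ satisfy the Eschenburg freeness condition and a₁+a₂+a₃ = b₁+b₂+b₃. Then either a₁ ≡ a₂ ≡ a₃ (mod 2) or b₁ ≡ b₂ ≡ b₃ (mod 2). -/
/-! Reduce modulo 2. If neither triple has constant parity, each has one or two odd entries, and
equal sums force the same number, so some permutation `σ` matches `aᵢ ≡ b_{σ(i)} (mod 2)` for all `i`;
then `2` divides both `a₁ - b_{σ(1)}` and `a₂ - b_{σ(2)}`, contradicting freeness. -/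

theorem exists_perm_eq_comp_of_sum_eq (x y : Fin 3 → ZMod 2)
    (hx : ∃ i j, x i ≠ x j) (hy : ∃ i j, y i ≠ y j) (hsum : ∑ i, x i = ∑ i, y i) :
    ∃ σ : Equiv.Perm (Fin 3), x = y ∘ σ := by
  revert x y
  decide

theorem dvd_gcd_sub_of_intCast_eq {k : ℕ} {m n m' n' : ℤ} (h : (m : ZMod k) = n)
    (h' : (m' : ZMod k) = n') : k ∣ Int.gcd (m - n) (m' - n') := by
  rw [ZMod.intCast_eq_intCast_iff_dvd_sub] at h h'
  exact Int.ofNat_dvd.mp (Int.dvd_coe_gcd (dvd_sub_comm.mp h) (dvd_sub_comm.mp h'))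

/-- If integer triples `a`, `b` satisfy the Eschenburg freeness condition
and `a₁+a₂+a₃ = b₁+b₂+b₃`, then either all `aᵢ` have the same parity or all `bᵢ` do. -/
theorem eschenburg_parity (a b : Fin 3 → ℤ)
    (hfree : ∀ σ : Equiv.Perm (Fin 3), Int.gcd (a 0 - b (σ 0)) (a 1 - b (σ 1)) = 1)
    (hsum : a 0 + a 1 + a 2 = b 0 + b 1 + b 2) :
    (∀ i j : Fin 3, a i % 2 = a j % 2) ∨ (∀ i j : Fin 3, b i % 2 = b j % 2) := by
  have hmod : ∀ u v : ℤ, u % 2 = v % 2 ↔ (u : ZMod 2) = v :=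
    fun u v => (ZMod.intCast_eq_intCast_iff' u v 2).symm
  simp only [hmod]
  by_contra! ⟨ha, hb⟩
  have hsum₂ : ∑ i, (a i : ZMod 2) = ∑ i, (b i : ZMod 2) := by
    simpa [Fin.sum_univ_three] using congrArg (Int.cast : ℤ → ZMod 2) hsum
  obtain ⟨σ, hσ⟩ := exists_perm_eq_comp_of_sum_eq _ _ ha hb hsum₂
  have htwo_dvd := dvd_gcd_sub_of_intCast_eq (congrFun hσ 0) (congrFun hσ 1)
  rw [hfree σ] at htwo_dvd
  exact absurd htwo_dvd (by norm_num)
end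

section
/- Let a = (a₁,a₂,a₃), b = (b₁,b₂,b₃) ∈ ℤ³ satisfy the Eschenburg freeness condition and a₁+a₂+a₃ = b₁+b₂+b₃. If p is a prime dividing gcd(aᵢ+aⱼ+1, a_k−b_ℓ) for some indices with {i,j,k} = {1,2,3} and ℓ ∈ {1,2,3}, then p is odd. -/
/-!
If `p = 2`, then `a (σ 0)` and `a (σ 1)` have opposite parities and `a (σ 2) ≡ b ℓ`.
Together with `∑ a = ∑ b` this makes the parity vector of `b` a permutation of that of `a`, so
some `a 0 - b (τ 0)` and `a 1 - b (τ 1)` are both even, contradicting freeness.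
-/

open Equiv

/-- `A (σ 0) ≠ A (σ 1)`, so `A` takes both values, and the two entries of `B` other than `B ℓ`
sum to `1`, so `B` takes both values as well, with the same third value. -/
theorem exists_perm_eq_comp_of_parity (A B : Fin 3 → ZMod 2) (σ : Perm (Fin 3)) (ℓ : Fin 3)
    (hA : A (σ 0) + A (σ 1) + 1 = 0) (hB : A (σ 2) = B ℓ)
    (hsum : A 0 + A 1 + A 2 = B 0 + B 1 + B 2) : ∃ τ : Perm (Fin 3), A = B ∘ τ := by
  revert A B σ ℓ
  decide

theorem intCast_comp_ne_of_gcd_eq_one {n : ℕ} (hn : n ≠ 1) (a b : Fin 3 → ℤ)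
    (hfree : ∀ σ : Perm (Fin 3), Int.gcd (a 0 - b (σ 0)) (a 1 - b (σ 1)) = 1)
    (τ : Perm (Fin 3)) : (fun i ↦ (a i : ZMod n)) ≠ fun i ↦ (b (τ i) : ZMod n) := by
  intro h
  have hdvd : (n : ℤ) ∣ Int.gcd (a 0 - b (τ 0)) (a 1 - b (τ 1)) :=
    Int.dvd_coe_gcd ((ZMod.intCast_eq_intCast_iff_dvd_sub _ _ _).mp (congrFun h 0).symm)
      ((ZMod.intCast_eq_intCast_iff_dvd_sub _ _ _).mp (congrFun h 1).symm)
  rw [hfree τ] at hdvd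
  exact hn (by exact_mod_cast Int.eq_one_of_dvd_one (by positivity) hdvd)

/-- **Lemma on odd primes.** If `a`, `b` satisfy the Eschenburg freeness
condition and `a₁+a₂+a₃ = b₁+b₂+b₃`, and a prime `p` divides
`gcd(aᵢ+aⱼ+1, a_k−b_ℓ)` for indices with `{i,j,k} = {1,2,3}` and `ℓ ∈ {1,2,3}`,
then `p` is odd. -/
theorem prime_dvd_gcd_odd (a b : Fin 3 → ℤ)
    (hfree : ∀ σ : Equiv.Perm (Fin 3), Int.gcd (a 0 - b (σ 0)) (a 1 - b (σ 1)) = 1)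
    (hsum : a 0 + a 1 + a 2 = b 0 + b 1 + b 2)
    (p : ℕ) (hp : p.Prime) (σ : Equiv.Perm (Fin 3)) (ℓ : Fin 3)
    (hdvd : p ∣ Int.gcd (a (σ 0) + a (σ 1) + 1) (a (σ 2) - b ℓ)) :
    Odd p := by
  refine hp.eq_two_or_odd'.resolve_left fun hp2 ↦ ?_
  subst hp2
  have hdvd : ((2 : ℕ) : ℤ) ∣ Int.gcd (a (σ 0) + a (σ 1) + 1) (a (σ 2) - b ℓ) :=
    Int.natCast_dvd_natCast.mpr hdvd
  have hA : ((a (σ 0) + a (σ 1) + 1 : ℤ) : ZMod 2) = 0 :=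
    (ZMod.intCast_zmod_eq_zero_iff_dvd _ 2).mpr (hdvd.trans (Int.gcd_dvd_left _ _))
  have hB : ((a (σ 2) : ℤ) : ZMod 2) = b ℓ :=
    ((ZMod.intCast_eq_intCast_iff_dvd_sub _ _ 2).mpr (hdvd.trans (Int.gcd_dvd_right _ _))).symm
  push_cast at hA
  obtain ⟨τ, hτ⟩ := exists_perm_eq_comp_of_parity (fun i ↦ (a i : ZMod 2))
    (fun i ↦ (b i : ZMod 2)) σ ℓ hA hB
    (by exact_mod_cast congrArg (Int.cast : ℤ → ZMod 2) hsum)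
  exact intCast_comp_ne_of_gcd_eq_one (by norm_num) a b hfree τ hτ
end

section
/- Let a = (a₁,a₂,a₃), b = (b₁,b₂,b₃) ∈ ℤ³ satisfy the Eschenburg freeness condition and a₁+a₂+a₃ = b₁+b₂+b₃, and let c ∈ ℤ. Then all five entries of the 5-tuple q^c are odd, and q^c satisfies the Bazaikin freeness condition if and only if gcd(aᵢ+aⱼ+1+2c, a_k−b_ℓ) = 1 for all indices with {i,j,k} = {1,2,3} and all ℓ ∈ {1,2,3}. -/
/-!
With `x = a + c` and `y = b + c` we have `q = 2z + 1` for `z = (x₀, x₁, x₂, -y₁ - 1, -y₂ - 1)`,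
and `∑ q = 2y₀ + 1` since `∑ x = ∑ y`. If `m` is the index missed by `σ 0, …, σ 3`, then
`q (σ 2) + q (σ 3) = ∑ q - q m - (q (σ 0) + q (σ 1))`, so the Bazaikin gcd equals
`2 gcd(z i + z j + 1, y₀ - z m)` for `i = σ 0`, `j = σ 1`. Depending on which of `i, j, m` are
`x`-slots, subtracting one argument from the other (using `∑ x = ∑ y`) turns this into a gcd
`gcd(x s + x t + 1, x u - y ℓ)` of the right-hand side, except in the mixed case
`gcd(x s - y k, y₀ - x u)`. That one is always 1: for a permutation `π` the differences
`x s - y (π s)` sum to zero, so any two of them have the gcd of the first two, which is 1 by the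
Eschenburg condition.
-/

open Equiv Function Fin

theorem Int.gcd_two_mul_eq_two_iff (u v : ℤ) : Int.gcd (2 * u) (2 * v) = 2 ↔ Int.gcd u v = 1 := by
  rw [Int.gcd_mul_left, show (2 : ℤ).natAbs = 2 from rfl]
  omega

theorem Int.gcd_eq_gcd_of_add_add_eq_zero {X Y Z : ℤ} (h : X + Y + Z = 0) :
    Int.gcd X Y = Int.gcd X Z := by
  rw [← Int.gcd_neg (b := Z), show -Z = X + Y by linarith, Int.gcd_self_add_right]

theorem Fin.add_add_eq_sum_of_ne {M : Type*} [AddCommMonoid M] (f : Fin 3 → M) {s t u : Fin 3}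
    (hst : s ≠ t) (hsu : s ≠ u) (htu : t ≠ u) : f s + f t + f u = ∑ i, f i := by
  fin_cases s <;> fin_cases t <;> fin_cases u <;> simp_all [Fin.sum_univ_three] <;> abel

theorem Fin.exists_ne_ne_of_ne {s t : Fin 3} (hst : s ≠ t) : ∃ u, s ≠ u ∧ t ≠ u := by
  revert s t; decide

theorem Fin.exists_ne_ne_ne (u : Fin 3) : ∃ s t, s ≠ t ∧ s ≠ u ∧ t ≠ u := by
  revert u; decide

theorem Fin.eq_of_ne_of_ne {k l n : Fin 2} (hkl : k ≠ l) (hkn : k ≠ n) : l = n := by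
  revert k l n; decide

theorem Fin.castAdd_ne_natAdd {m n : ℕ} (i : Fin m) (j : Fin n) : castAdd n i ≠ natAdd m j := by
  simp only [ne_eq, Fin.ext_iff, val_castAdd, val_natAdd]
  omega

theorem Fin.ne_rev (k : Fin 2) : k ≠ k.rev := by
  revert k; decide

theorem Int.gcd_eq_gcd_zero_one_of_sum_eq_zero (X : Fin 3 → ℤ) (hX : ∑ i, X i = 0) {i j : Fin 3}
    (hij : i ≠ j) : Int.gcd (X i) (X j) = Int.gcd (X 0) (X 1) := by
  rw [Fin.sum_univ_three] at hX
  have h02 := (Int.gcd_eq_gcd_of_add_add_eq_zero hX).symm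
  have h12 : Int.gcd (X 1) (X 2) = Int.gcd (X 0) (X 1) := by
    rw [← Int.gcd_eq_gcd_of_add_add_eq_zero (show X 1 + X 0 + X 2 = 0 by linarith), Int.gcd_comm]
  fin_cases i <;> fin_cases j <;>
    simp_all [Int.gcd_comm (X 1) (X 0), Int.gcd_comm (X 2) (X 0), Int.gcd_comm (X 2) (X 1)]

theorem Int.gcd_add_add_eq_gcd_add_sum_sub (q : Fin 5 → ℤ) (σ : Perm (Fin 5)) :
    Int.gcd (q (σ 0) + q (σ 1)) (q (σ 2) + q (σ 3)) =
      Int.gcd (q (σ 0) + q (σ 1)) (∑ i, q i - q (σ 4)) := by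
  rw [← Equiv.sum_comp σ, Fin.sum_univ_five, add_sub_cancel_right, add_assoc _ (q (σ 2)),
    Int.gcd_self_add_right]

theorem Int.gcd_two_mul_add_one_eq_two_iff (z : Fin 5 → ℤ) {w : ℤ} (hz : ∑ k, z k = w - 2)
    (i j m : Fin 5) :
    Int.gcd (2 * z i + 1 + (2 * z j + 1)) (∑ k, (2 * z k + 1) - (2 * z m + 1)) = 2 ↔
      Int.gcd (z i + z j + 1) (w - z m) = 1 := by
  rw [← Int.gcd_two_mul_eq_two_iff, Finset.sum_add_distrib, ← Finset.mul_sum, hz]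
  congr! 2 <;> ring

theorem Equiv.Perm.forall_apply_three_iff {α : Type*} {x₀ x₁ x₂ : α} (h₀₁ : x₀ ≠ x₁)
    (h₀₂ : x₀ ≠ x₂) (h₁₂ : x₁ ≠ x₂) (P : α → α → α → Prop) :
    (∀ σ : Perm α, P (σ x₀) (σ x₁) (σ x₂)) ↔
      ∀ i j k, i ≠ j → i ≠ k → j ≠ k → P i j k := by
  have injective_vec {a b c : α} (hab : a ≠ b) (hac : a ≠ c) (hbc : b ≠ c) :
      Injective ![a, b, c] := by
    intro i j
    fin_cases i <;> fin_cases j <;> simp [hab, hac, hbc, hab.symm, hac.symm, hbc.symm]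
  refine ⟨fun h i j k hij hik hjk => ?_, fun h σ => h _ _ _ (by simpa) (by simpa) (by simpa)⟩
  obtain ⟨σ, hσ⟩ := Perm.exists_extending_pair _ _ (injective_vec h₀₁ h₀₂ h₁₂)
    (injective_vec hij hik hjk)
  have hσ₀ : σ x₀ = i := hσ 0
  have hσ₁ : σ x₁ = j := hσ 1
  have hσ₂ : σ x₂ = k := hσ 2
  simpa only [hσ₀, hσ₁, hσ₂] using h σ

section Bazaikin

variable {x y : Fin 3 → ℤ}

theorem gcd_sub_eq_one_of_eschenburg
    (hfree : ∀ σ : Perm (Fin 3), Int.gcd (x 0 - y (σ 0)) (x 1 - y (σ 1)) = 1)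
    (hsum : ∑ i, x i = ∑ i, y i) {s t k l : Fin 3} (hst : s ≠ t) (hkl : k ≠ l) :
    Int.gcd (x s - y k) (x t - y l) = 1 := by
  obtain ⟨u, hsu, htu⟩ := Fin.exists_ne_ne_of_ne hst
  obtain ⟨n, hkn, hln⟩ := Fin.exists_ne_ne_of_ne hkl
  refine (Perm.forall_apply_three_iff hst hsu htu
    (fun k l _ => Int.gcd (x s - y k) (x t - y l) = 1)).mp (fun π => ?_) k l n hkl hkn hln
  have hX : ∑ i, (x i - y (π i)) = 0 := by
    rw [Finset.sum_sub_distrib, Equiv.sum_comp, hsum, sub_self]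
  exact (Int.gcd_eq_gcd_zero_one_of_sum_eq_zero _ hX hst).trans (hfree π)

theorem add_add_eq_add_add_of_ne (hsum : ∑ i, x i = ∑ i, y i) {s t u : Fin 3} (hst : s ≠ t)
    (hsu : s ≠ u) (htu : t ≠ u) {k l : Fin 2} (hkl : k ≠ l) :
    x s + x t + x u = y 0 + y k.succ + y l.succ := by
  rw [add_add_eq_sum_of_ne x hst hsu htu, hsum,
    add_add_eq_sum_of_ne y (succ_ne_zero k).symm (succ_ne_zero l).symm (succ_injective _ |>.ne hkl)]

-- The tuple `q^c` is `2 * bazaikinHalf (a + c) (b + c) + 1`.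
def bazaikinHalf (x y : Fin 3 → ℤ) : Fin (3 + 2) → ℤ :=
  Fin.append x fun k => -y k.succ - 1

@[simp]
theorem bazaikinHalf_castAdd (s : Fin 3) : bazaikinHalf x y (castAdd 2 s) = x s :=
  append_left _ _ s

@[simp]
theorem bazaikinHalf_natAdd (k : Fin 2) : bazaikinHalf x y (natAdd 3 k) = -y k.succ - 1 :=
  append_right _ _ k

theorem bazaikinHalf_eq : bazaikinHalf x y = ![x 0, x 1, x 2, -y 1 - 1, -y 2 - 1] := by
  funext i
  fin_cases i <;> rfl

theorem sum_bazaikinHalf (hsum : ∑ i, x i = ∑ i, y i) : ∑ i, bazaikinHalf x y i = y 0 - 2 := by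
  rw [Fin.sum_univ_add]
  simp only [bazaikinHalf_castAdd, bazaikinHalf_natAdd, hsum, Fin.sum_univ_three, Fin.sum_univ_two,
    succ_zero_eq_one, succ_one_eq_two]
  ring

theorem vec_eq_two_mul_bazaikinHalf_add_one :
    ![2 * x 0 + 1, 2 * x 1 + 1, 2 * x 2 + 1, -(2 * y 1 + 1), -(2 * y 2 + 1)] =
      fun i => 2 * bazaikinHalf x y i + 1 := by
  rw [bazaikinHalf_eq]
  funext i
  fin_cases i <;> simp only [Matrix.cons_val, Matrix.cons_val_zero, Matrix.cons_val_one,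
    Fin.zero_eta, Fin.mk_one, Fin.reduceFinMk] <;> ring

theorem gcd_eq_one_of_forall_gcd_bazaikinHalf_eq_one (hsum : ∑ i, x i = ∑ i, y i)
    (h : ∀ i j m : Fin (3 + 2), i ≠ j → i ≠ m → j ≠ m →
      Int.gcd (bazaikinHalf x y i + bazaikinHalf x y j + 1) (y 0 - bazaikinHalf x y m) = 1)
    {s t u : Fin 3} (hst : s ≠ t) (hsu : s ≠ u) (htu : t ≠ u) (ℓ : Fin 3) :
    Int.gcd (x s + x t + 1) (x u - y ℓ) = 1 := by
  induction ℓ using Fin.cases with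
  | zero =>
    have := h (castAdd 2 s) (castAdd 2 t) (castAdd 2 u) (castAdd_inj.not.mpr hst)
      (castAdd_inj.not.mpr hsu) (castAdd_inj.not.mpr htu)
    rwa [bazaikinHalf_castAdd, bazaikinHalf_castAdd, bazaikinHalf_castAdd, ← neg_sub (x u),
      Int.gcd_neg] at this
  | succ k =>
    have := h (castAdd 2 s) (castAdd 2 t) (natAdd 3 k.rev) (castAdd_inj.not.mpr hst)
      (castAdd_ne_natAdd _ _) (castAdd_ne_natAdd _ _)
    rwa [bazaikinHalf_castAdd, bazaikinHalf_castAdd, bazaikinHalf_natAdd,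
      show y 0 - (-y k.rev.succ - 1) = (x s + x t + 1) + (x u - y k.succ) by
        linear_combination (add_add_eq_add_add_of_ne hsum hst hsu htu k.ne_rev).symm,
      Int.gcd_self_add_right] at this

theorem gcd_bazaikinHalf_castAdd_eq_one
    (hfree : ∀ σ : Perm (Fin 3), Int.gcd (x 0 - y (σ 0)) (x 1 - y (σ 1)) = 1)
    (hsum : ∑ i, x i = ∑ i, y i)
    (h : ∀ s t u : Fin 3, s ≠ t → s ≠ u → t ≠ u → ∀ ℓ, Int.gcd (x s + x t + 1) (x u - y ℓ) = 1)
    {s : Fin 3} {j m : Fin (3 + 2)} (hij : castAdd 2 s ≠ j) (him : castAdd 2 s ≠ m) (hjm : j ≠ m) :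
    Int.gcd (x s + bazaikinHalf x y j + 1) (y 0 - bazaikinHalf x y m) = 1 := by
  induction j using Fin.addCases with
  | left t =>
    have hst : s ≠ t := ne_of_apply_ne _ hij
    induction m using Fin.addCases with
    | left u =>
      rw [bazaikinHalf_castAdd, bazaikinHalf_castAdd, ← neg_sub (x u), Int.gcd_neg]
      exact h s t u hst (ne_of_apply_ne _ him) (ne_of_apply_ne _ hjm) 0
    | right k =>
      obtain ⟨u, hsu, htu⟩ := exists_ne_ne_of_ne hst
      rw [bazaikinHalf_castAdd, bazaikinHalf_natAdd,
        show y 0 - (-y k.succ - 1) = (x s + x t + 1) + (x u - y k.rev.succ) by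
          linear_combination (add_add_eq_add_add_of_ne hsum hst hsu htu k.ne_rev).symm,
        Int.gcd_self_add_right]
      exact h s t u hst hsu htu _
  | right k =>
    rw [bazaikinHalf_natAdd, show x s + (-y k.succ - 1) + 1 = x s - y k.succ by ring]
    induction m using Fin.addCases with
    | left u =>
      rw [bazaikinHalf_castAdd, ← neg_sub (x u), Int.gcd_neg]
      exact gcd_sub_eq_one_of_eschenburg hfree hsum (ne_of_apply_ne _ him) (succ_ne_zero k)
    | right l =>
      have hkl : k ≠ l := ne_of_apply_ne _ hjm
      obtain ⟨t, u, htu, hts, hus⟩ := exists_ne_ne_ne s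
      rw [bazaikinHalf_natAdd,
        show y 0 - (-y l.succ - 1) = (x s - y k.succ) + (x t + x u + 1) by
          linear_combination (add_add_eq_add_add_of_ne hsum htu hts hus hkl).symm,
        Int.gcd_self_add_right, Int.gcd_comm]
      exact h t u s htu hts hus _

theorem gcd_bazaikinHalf_eq_one
    (hfree : ∀ σ : Perm (Fin 3), Int.gcd (x 0 - y (σ 0)) (x 1 - y (σ 1)) = 1)
    (hsum : ∑ i, x i = ∑ i, y i)
    (h : ∀ s t u : Fin 3, s ≠ t → s ≠ u → t ≠ u → ∀ ℓ, Int.gcd (x s + x t + 1) (x u - y ℓ) = 1)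
    {i j m : Fin (3 + 2)} (hij : i ≠ j) (him : i ≠ m) (hjm : j ≠ m) :
    Int.gcd (bazaikinHalf x y i + bazaikinHalf x y j + 1) (y 0 - bazaikinHalf x y m) = 1 := by
  induction i using Fin.addCases with
  | left s =>
    rw [bazaikinHalf_castAdd]
    exact gcd_bazaikinHalf_castAdd_eq_one hfree hsum h hij him hjm
  | right k =>
    induction j using Fin.addCases with
    | left s =>
      rw [add_comm (bazaikinHalf x y _), bazaikinHalf_castAdd]
      exact gcd_bazaikinHalf_castAdd_eq_one hfree hsum h hij.symm hjm him
    | right l =>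
      have hkl : k ≠ l := ne_of_apply_ne _ hij
      induction m using Fin.addCases with
      | left u =>
        obtain ⟨s, t, hst, hsu, htu⟩ := exists_ne_ne_ne u
        rw [bazaikinHalf_natAdd, bazaikinHalf_natAdd, bazaikinHalf_castAdd,
          show -y k.succ - 1 + (-y l.succ - 1) + 1 = -((x s + x t + 1) + (x u - y 0)) by
            linear_combination add_add_eq_add_add_of_ne hsum hst hsu htu hkl,
          ← neg_sub (x u), Int.neg_gcd, Int.gcd_neg, Int.gcd_comm, Int.gcd_add_self_right,
          Int.gcd_comm]
        exact h s t u hst hsu htu 0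
      | right n =>
        exact absurd (eq_of_ne_of_ne hkl (ne_of_apply_ne _ him)) (ne_of_apply_ne _ hjm)

theorem forall_gcd_bazaikinHalf_iff
    (hfree : ∀ σ : Perm (Fin 3), Int.gcd (x 0 - y (σ 0)) (x 1 - y (σ 1)) = 1)
    (hsum : ∑ i, x i = ∑ i, y i) :
    (∀ i j m : Fin (3 + 2), i ≠ j → i ≠ m → j ≠ m →
      Int.gcd (bazaikinHalf x y i + bazaikinHalf x y j + 1) (y 0 - bazaikinHalf x y m) = 1) ↔
      ∀ s t u : Fin 3, s ≠ t → s ≠ u → t ≠ u → ∀ ℓ, Int.gcd (x s + x t + 1) (x u - y ℓ) = 1 :=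
  ⟨fun h _ _ _ hst hsu htu => gcd_eq_one_of_forall_gcd_bazaikinHalf_eq_one hsum h hst hsu htu,
    fun h _ _ _ => gcd_bazaikinHalf_eq_one hfree hsum h⟩

end Bazaikin

/-- Let `a`, `b` satisfy the Eschenburg freeness condition with
`a₁+a₂+a₃ = b₁+b₂+b₃`, and let `c ∈ ℤ`.  Then all five entries of the tuple
`q^c = (2(a₁+c)+1, 2(a₂+c)+1, 2(a₃+c)+1, −(2(b₂+c)+1), −(2(b₃+c)+1))` are odd, and
`q^c` satisfies the Bazaikin freeness condition iff
`gcd(aᵢ+aⱼ+1+2c, a_k−b_ℓ) = 1` for all indices with `{i,j,k} = {1,2,3}`, `ℓ ∈ {1,2,3}`. -/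
theorem bazaikin_freeness_iff (a b : Fin 3 → ℤ)
    (hfree : ∀ σ : Equiv.Perm (Fin 3), Int.gcd (a 0 - b (σ 0)) (a 1 - b (σ 1)) = 1)
    (hsum : a 0 + a 1 + a 2 = b 0 + b 1 + b 2)
    (c : ℤ) (q : Fin 5 → ℤ)
    (hq : q = ![2 * (a 0 + c) + 1, 2 * (a 1 + c) + 1, 2 * (a 2 + c) + 1,
      -(2 * (b 1 + c) + 1), -(2 * (b 2 + c) + 1)]) :
    (∀ i : Fin 5, Odd (q i)) ∧
    ((∀ σ : Equiv.Perm (Fin 5),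
        Int.gcd (q (σ 0) + q (σ 1)) (q (σ 2) + q (σ 3)) = 2) ↔
      (∀ σ : Equiv.Perm (Fin 3), ∀ ℓ : Fin 3,
        Int.gcd (a (σ 0) + a (σ 1) + 1 + 2 * c) (a (σ 2) - b ℓ) = 1)) := by
  set x : Fin 3 → ℤ := fun s => a s + c
  set y : Fin 3 → ℤ := fun k => b k + c
  have hxy : ∑ i, x i = ∑ i, y i := by
    simp only [x, y, Fin.sum_univ_three]
    linarith
  have hfree' : ∀ σ : Perm (Fin 3), Int.gcd (x 0 - y (σ 0)) (x 1 - y (σ 1)) = 1 := by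
    simpa only [x, y, add_sub_add_right_eq_sub] using hfree
  have hq' : q = fun i => 2 * bazaikinHalf x y i + 1 :=
    hq.trans (vec_eq_two_mul_bazaikinHalf_add_one (x := x) (y := y))
  have hpair (i j m : Fin 5) : Int.gcd (q i + q j) (∑ k, q k - q m) = 2 ↔
      Int.gcd (bazaikinHalf x y i + bazaikinHalf x y j + 1) (y 0 - bazaikinHalf x y m) = 1 := by
    rw [hq']
    exact Int.gcd_two_mul_add_one_eq_two_iff _ (sum_bazaikinHalf hxy) i j m
  have hgcd (s t u ℓ : Fin 3) : Int.gcd (a s + a t + 1 + 2 * c) (a u - b ℓ) =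
      Int.gcd (x s + x t + 1) (x u - y ℓ) := by
    congr 1 <;> ring
  refine ⟨fun i => hq' ▸ odd_two_mul_add_one _, ?_⟩
  simp_rw [Int.gcd_add_add_eq_gcd_add_sum_sub q, hpair, hgcd]
  refine (Perm.forall_apply_three_iff (x₀ := (0 : Fin 5)) (x₁ := 1) (x₂ := 4) (by decide)
    (by decide) (by decide) (fun i j m => Int.gcd (bazaikinHalf x y i + bazaikinHalf x y j + 1)
      (y 0 - bazaikinHalf x y m) = 1)).trans ((forall_gcd_bazaikinHalf_iff hfree' hxy).trans ?_)
  exact (Perm.forall_apply_three_iff (x₀ := (0 : Fin 3)) (x₁ := 1) (x₂ := 2) (by decide)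
    (by decide) (by decide) (fun s t u => ∀ ℓ, Int.gcd (x s + x t + 1) (x u - y ℓ) = 1)).symm
end

section
/- Let a = (a₁,a₂,a₃), b = (b₁,b₂,b₃) ∈ ℤ³ satisfy the Eschenburg freeness condition, a₁+a₂+a₃ = b₁+b₂+b₃, and a_k ≠ b_ℓ for all k, ℓ ∈ {1,2,3}. Let P be the product, over all pairs (k,ℓ) ∈ {1,2,3}², of the product of all primes p dividing a_k − b_ℓ with gcd(p, aᵢ+aⱼ+1) = 1 (where {i,j,k} = {1,2,3}). Then for every integer μ ≥ 1 and for c = 2^{μ−1}·P^μ as well as for c = −2^{μ−1}·P^μ, one has gcd(aᵢ+aⱼ+1+2c, a_k−b_ℓ) = 1 for all indices with {i,j,k} = {1,2,3} and all ℓ ∈ {1,2,3}. -/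
/-!
Write `sₖ = aᵢ + aⱼ + 1` and let `p` be a prime dividing both `sₖ + 2c` and `aₖ - b_ℓ`.
Because the differences `aᵢ - b_{τ i}` along a permutation `τ` sum to zero, freeness makes any two
differences `aₖ - b_ℓ` in distinct rows and distinct columns coprime.

If `p = 2`, then `aₖ ≡ b_ℓ` and `aᵢ + aⱼ` is odd, so `b_ℓ' + b_ℓ''` is odd too, and one of the two
matchings of `{aᵢ, aⱼ}` with `{b_ℓ', b_ℓ''}` consists of two even differences.

If `p` is odd, then `p ∣ sₖ ↔ p ∣ c ↔ p ∣ P`. On the other hand `p ∣ P ↔ ¬ p ∣ sₖ`: a prime factor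
of `P` divides some `a_k' - b_ℓ'` but not `s_k'`; for `k' = k` this is the claim, for `ℓ' = ℓ` use
`sₖ - s_k' = a_k' - aₖ`, and otherwise the two differences are coprime.
-/

lemma apply_perm_add_add {M : Type*} [AddCommMonoid M] (f : Fin 3 → M) (τ : Equiv.Perm (Fin 3)) :
    f (τ 0) + f (τ 1) + f (τ 2) = f 0 + f 1 + f 2 := by
  simpa [Fin.sum_univ_three] using Equiv.sum_comp τ f

lemma exists_perm_apply_eq_and_apply_eq {α : Type*} [DecidableEq α] {k₁ k₂ l₁ l₂ : α}
    (hk : k₁ ≠ k₂) (hl : l₁ ≠ l₂) : ∃ τ : Equiv.Perm α, τ k₁ = l₁ ∧ τ k₂ = l₂ := by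
  set π := Equiv.swap k₁ l₁
  have hπ : l₁ ≠ π k₂ := by
    rw [← Equiv.swap_apply_left k₁ l₁]
    exact π.injective.ne hk
  exact ⟨π.trans (Equiv.swap (π k₂) l₂), by simp [π, Equiv.swap_apply_of_ne_of_ne hπ hl], by simp⟩

lemma pairwise_isCoprime_of_add_add_eq_zero {R : Type*} [CommRing R] (d : Fin 3 → R)
    (hsum : d 0 + d 1 + d 2 = 0) (h₀₁ : IsCoprime (d 0) (d 1)) :
    Pairwise (Function.onFun IsCoprime d) := by
  have h₀₂ : IsCoprime (d 0) (d 2) := by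
    convert (h₀₁.add_mul_left_right 1).neg_right using 1
    linear_combination hsum
  have h₁₂ : IsCoprime (d 1) (d 2) := by
    convert (h₀₁.symm.add_mul_left_right 1).neg_right using 1
    linear_combination hsum
  intro i j hij
  fin_cases i <;> fin_cases j <;>
    first
      | exact absurd rfl hij
      | exact h₀₁ | exact h₀₁.symm | exact h₀₂ | exact h₀₂.symm | exact h₁₂ | exact h₁₂.symm

lemma not_two_dvd_add_add_one_and_sub {x₀ x₁ x₂ y₀ y₁ y₂ : ℤ}
    (hsum : x₀ + x₁ + x₂ = y₀ + y₁ + y₂) (h₀₁ : IsCoprime (x₀ - y₀) (x₁ - y₁))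
    (h₁₀ : IsCoprime (x₀ - y₁) (x₁ - y₀)) : ¬ (2 ∣ x₀ + x₁ + 1 ∧ 2 ∣ x₂ - y₂) := by
  rintro ⟨hx, hd⟩
  have : (2 ∣ x₀ - y₀ ∧ 2 ∣ x₁ - y₁) ∨ (2 ∣ x₀ - y₁ ∧ 2 ∣ x₁ - y₀) := by omega
  rcases this with ⟨h₀, h₁⟩ | ⟨h₀, h₁⟩
  · exact Int.prime_two.not_isUnit (h₀₁.isUnit_of_dvd' h₀ h₁)
  · exact Int.prime_two.not_isUnit (h₁₀.isUnit_of_dvd' h₀ h₁)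

lemma prime_dvd_prod_natCast_iff {p : ℤ} (hp : Prime p) {S : Finset ℕ} (hS : ∀ q ∈ S, q.Prime) :
    p ∣ ∏ q ∈ S, (q : ℤ) ↔ p.natAbs ∈ S := by
  rw [hp.dvd_finsetProd_iff]
  constructor
  · rintro ⟨q, hq, hpq⟩
    have : p.natAbs = q :=
      ((hS q hq).eq_one_or_self_of_dvd _ (Int.natAbs_dvd_natAbs.2 hpq)).resolve_left
        (Int.prime_iff_natAbs_prime.1 hp).ne_one
    rwa [this]
  · exact fun h => ⟨_, h, Int.dvd_natAbs.2 dvd_rfl⟩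

lemma prime_dvd_prod_primeFactors_filter_iff {p : ℤ} (hp : Prime p) {n : ℤ} (hn : n ≠ 0) (t : ℤ) :
    p ∣ ∏ q ∈ n.natAbs.primeFactors.filter (fun q : ℕ => Int.gcd (q : ℤ) t = 1), (q : ℤ) ↔
      p ∣ n ∧ ¬ p ∣ t := by
  rw [prime_dvd_prod_natCast_iff hp fun q hq =>
      Nat.prime_of_mem_primeFactors (Finset.mem_of_mem_filter q hq),
    Finset.mem_filter, Nat.mem_primeFactors, Int.natAbs_dvd_natAbs, ← hp.coprime_iff_not_dvd,
    Int.isCoprime_iff_gcd_eq_one]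
  simp [Int.prime_iff_natAbs_prime.1 hp, hn, Int.gcd, Int.natAbs_abs]

def IsEschenburgFree (a b : Fin 3 → ℤ) : Prop :=
  ∀ σ : Equiv.Perm (Fin 3), Int.gcd (a 0 - b (σ 0)) (a 1 - b (σ 1)) = 1

/-- `complSum a k` is `aᵢ + aⱼ + 1` for `{i, j, k} = {0, 1, 2}`. -/
def complSum (a : Fin 3 → ℤ) (k : Fin 3) : ℤ := a 0 + a 1 + a 2 - a k + 1

def coprimePrimeProduct (a b : Fin 3 → ℤ) : ℤ :=
  ∏ k : Fin 3, ∏ ℓ : Fin 3,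
    ∏ p ∈ (a k - b ℓ).natAbs.primeFactors.filter (fun p : ℕ => Int.gcd (p : ℤ) (complSum a k) = 1),
      (p : ℤ)

variable {a b : Fin 3 → ℤ}

lemma complSum_perm_two (σ : Equiv.Perm (Fin 3)) : complSum a (σ 2) = a (σ 0) + a (σ 1) + 1 := by
  have := apply_perm_add_add a σ
  unfold complSum
  linarith

lemma IsEschenburgFree.isCoprime_sub_sub (hfree : IsEschenburgFree a b)
    (hsum : a 0 + a 1 + a 2 = b 0 + b 1 + b 2) {k₁ k₂ ℓ₁ ℓ₂ : Fin 3} (hk : k₁ ≠ k₂) (hℓ : ℓ₁ ≠ ℓ₂) :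
    IsCoprime (a k₁ - b ℓ₁) (a k₂ - b ℓ₂) := by
  obtain ⟨τ, rfl, rfl⟩ := exists_perm_apply_eq_and_apply_eq hk hℓ
  refine pairwise_isCoprime_of_add_add_eq_zero (fun i => a i - b (τ i)) ?_
    (Int.isCoprime_iff_gcd_eq_one.2 (hfree τ)) hk
  linarith [apply_perm_add_add b τ]

lemma IsEschenburgFree.not_two_dvd_complSum_and_sub (hfree : IsEschenburgFree a b)
    (hsum : a 0 + a 1 + a 2 = b 0 + b 1 + b 2) (σ : Equiv.Perm (Fin 3)) (ℓ : Fin 3) :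
    ¬ (2 ∣ complSum a (σ 2) ∧ 2 ∣ a (σ 2) - b ℓ) := by
  set τ := Equiv.swap ℓ 2
  have hσ : σ 0 ≠ σ 1 := σ.injective.ne (by decide)
  have hτ : τ 0 ≠ τ 1 := τ.injective.ne (by decide)
  rw [complSum_perm_two, ← Equiv.swap_apply_right ℓ 2]
  refine not_two_dvd_add_add_one_and_sub ?_ (hfree.isCoprime_sub_sub hsum hσ hτ)
    (hfree.isCoprime_sub_sub hsum hσ hτ.symm)
  linarith [apply_perm_add_add a σ, apply_perm_add_add b τ]

lemma prime_dvd_coprimePrimeProduct_iff (hne : ∀ k ℓ : Fin 3, a k ≠ b ℓ) {p : ℤ} (hp : Prime p) :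
    p ∣ coprimePrimeProduct a b ↔ ∃ k ℓ : Fin 3, p ∣ a k - b ℓ ∧ ¬ p ∣ complSum a k := by
  have hkℓ (k ℓ : Fin 3) := prime_dvd_prod_primeFactors_filter_iff hp (sub_ne_zero.2 (hne k ℓ))
  simp only [coprimePrimeProduct, hkℓ, hp.dvd_finsetProd_iff, Finset.mem_univ, true_and]

lemma IsEschenburgFree.prime_dvd_coprimePrimeProduct_iff_not_dvd_complSum
    (hfree : IsEschenburgFree a b) (hsum : a 0 + a 1 + a 2 = b 0 + b 1 + b 2)
    (hne : ∀ k ℓ : Fin 3, a k ≠ b ℓ) {p : ℤ} (hp : Prime p) {k ℓ : Fin 3} (hpd : p ∣ a k - b ℓ) :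
    p ∣ coprimePrimeProduct a b ↔ ¬ p ∣ complSum a k := by
  rw [prime_dvd_coprimePrimeProduct_iff hne hp]
  refine ⟨?_, fun hs => ⟨k, ℓ, hpd, hs⟩⟩
  rintro ⟨k', ℓ', hpd', hs'⟩ hs
  by_cases hk : k' = k
  · exact hs' (hk ▸ hs)
  by_cases hℓ : ℓ' = ℓ
  · subst hℓ
    have h : complSum a k' = complSum a k + ((a k - b ℓ') - (a k' - b ℓ')) := by
      unfold complSum; ring
    exact hs' (h ▸ hs.add (hpd.sub hpd'))
  exact hp.not_isUnit ((hfree.isCoprime_sub_sub hsum hk hℓ).isUnit_of_dvd' hpd' hpd)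

lemma prime_dvd_two_pow_mul_pow_iff {p : ℤ} (hp : Prime p) (hp2 : ¬ p ∣ 2) (m : ℕ) {n : ℕ}
    (hn : n ≠ 0) (P : ℤ) : p ∣ 2 ^ m * P ^ n ↔ p ∣ P := by
  rw [hp.dvd_mul, hp.dvd_pow_iff_dvd hn, or_iff_right (mt hp.dvd_of_dvd_pow hp2)]

/-- **Lemma: freeness for special `c`.**  Let `a`, `b` satisfy the Eschenburg
freeness condition, `a₁+a₂+a₃ = b₁+b₂+b₃`, and `a_k ≠ b_ℓ` for all `k, ℓ`.  Let `P` be the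
product, over all pairs `(k,ℓ)`, of the product of all primes `p` dividing `a_k − b_ℓ` with
`gcd(p, aᵢ+aⱼ+1) = 1` (where `{i,j,k} = {1,2,3}`, so `aᵢ+aⱼ+1 = a₁+a₂+a₃ − a_k + 1`).
Then for every `μ ≥ 1` and `c = ±2^{μ−1}·P^μ` one has
`gcd(aᵢ+aⱼ+1+2c, a_k−b_ℓ) = 1` for all relevant indices. -/
theorem gcd_eq_one_for_special_c (a b : Fin 3 → ℤ)
    (hfree : ∀ σ : Equiv.Perm (Fin 3), Int.gcd (a 0 - b (σ 0)) (a 1 - b (σ 1)) = 1)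
    (hsum : a 0 + a 1 + a 2 = b 0 + b 1 + b 2)
    (hne : ∀ k ℓ : Fin 3, a k ≠ b ℓ)
    (P : ℤ)
    (hP : P = ∏ k : Fin 3, ∏ ℓ : Fin 3,
      ∏ p ∈ (a k - b ℓ).natAbs.primeFactors.filter
        (fun (p : ℕ) => Int.gcd (p : ℤ) (a 0 + a 1 + a 2 - a k + 1) = 1), (p : ℤ))
    (μ : ℕ) (hμ : 1 ≤ μ) (c : ℤ)
    (hc : c = 2 ^ (μ - 1) * P ^ μ ∨ c = -(2 ^ (μ - 1) * P ^ μ)) :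
    ∀ σ : Equiv.Perm (Fin 3), ∀ ℓ : Fin 3,
      Int.gcd (a (σ 0) + a (σ 1) + 1 + 2 * c) (a (σ 2) - b ℓ) = 1 := by
  intro σ ℓ
  replace hfree : IsEschenburgFree a b := hfree
  replace hP : P = coprimePrimeProduct a b := hP
  rw [← complSum_perm_two, ← Int.isCoprime_iff_gcd_eq_one]
  refine isCoprime_of_prime_dvd (fun h => hne _ _ (sub_eq_zero.1 h.2)) fun p hp hpx hpd => ?_
  have hsc : p ∣ complSum a (σ 2) ↔ p ∣ 2 * c :=
    ⟨fun h => (dvd_add_right h).1 hpx, fun h => (dvd_add_left h).1 hpx⟩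
  by_cases hp2 : p ∣ 2
  · have h2 := hp.associated_of_dvd Int.prime_two hp2
    exact hfree.not_two_dvd_complSum_and_sub hsum σ ℓ
      ⟨h2.dvd_iff_dvd_left.1 (hsc.2 (hp2.mul_right c)), h2.dvd_iff_dvd_left.1 hpd⟩
  have hcP : p ∣ c ↔ p ∣ P := by
    rcases hc with rfl | rfl <;>
      simp only [dvd_neg, prime_dvd_two_pow_mul_pow_iff hp hp2 _ (by omega : μ ≠ 0)]
  refine iff_not_self (hsc.trans ?_)
  rw [hp.dvd_mul, or_iff_right hp2, hcP, hP,
    hfree.prime_dvd_coprimePrimeProduct_iff_not_dvd_complSum hsum hne hp hpd]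
end

section
/- Let a = (a₁,a₂,a₃), b = (b₁,b₂,b₃) ∈ ℤ³ satisfy the Eschenburg freeness condition, a₁+a₂+a₃ = b₁+b₂+b₃, and a_k ≠ b_ℓ for all k, ℓ ∈ {1,2,3}. Let P be the product, over all pairs (k,ℓ) ∈ {1,2,3}², of the product of all primes p dividing a_k − b_ℓ with gcd(p, aᵢ+aⱼ+1) = 1 (where {i,j,k} = {1,2,3}). Then for every integer μ ≥ 1 and for c = 2^{μ−1}·P^μ as well as for c = −2^{μ−1}·P^μ, all five entries of the 5-tuple q^c are odd and q^c satisfies the Bazaikin freeness condition. -/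
/-!
Halving, the pair sums of `q^c` are `a_i + a_j + 1 + 2c`, `a_i - b_ℓ` and `-(b₂ + b₃ + 1 + 2c)`,
and since `a₁ + a₂ + a₃ = b₁ + b₂ + b₃` the Bazaikin condition reduces to two coprimalities.
First `a_i - b_ℓ` and `a_j - b_m` are coprime for `i ≠ j`, `ℓ ≠ m`: the three differences
`a_t - b_{σ t}` of a permutation `σ` sum to zero, so any two of them are coprime once the first two
are. Second, no prime `p` divides both `a_i + a_j + 1 + 2c` and `a_k - b_ℓ` (`{i,j,k} = {1,2,3}`).
Such a `p` is odd by the first fact, and the odd primes dividing `c` are exactly those dividing some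
`a_{k'} - b_{ℓ'}` but not `a_{i'} + a_{j'} + 1`. If `p ∤ a_i + a_j + 1`, then `p ∣ c`, so
`p ∣ a_i + a_j + 1` after all. If `p ∣ a_i + a_j + 1`, then `p ∣ c`, which gives such `k', ℓ'`;
but `k' = k` is impossible, `ℓ' = ℓ` forces `p ∣ a_k - a_{k'}` and hence `p ∣ a_{i'} + a_{j'} + 1`,
and otherwise the first fact is violated.
-/

open Finset Equiv

theorem Int.gcd_eq_one_of_forall_prime_not_dvd {x y : ℤ}
    (h : ∀ p : ℕ, p.Prime → (p : ℤ) ∣ x → ¬(p : ℤ) ∣ y) : Int.gcd x y = 1 := by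
  rw [Int.gcd_eq_natAbs]
  exact Nat.coprime_of_dvd fun p hp hx hy =>
    h p hp (Int.natCast_dvd.mpr hx) (Int.natCast_dvd.mpr hy)

theorem Nat.Prime.not_dvd_of_gcd_eq_one {p : ℕ} (hp : p.Prime) {x y : ℤ}
    (h : Int.gcd x y = 1) (hx : (p : ℤ) ∣ x) : ¬(p : ℤ) ∣ y := fun hy =>
  (Nat.prime_iff_prime_int.mp hp).not_isUnit
    ((Int.isCoprime_iff_gcd_eq_one.mpr h).isUnit_of_dvd' hx hy)

theorem Nat.Prime.int_gcd_eq_one_iff {p : ℕ} (hp : p.Prime) {n : ℤ} :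
    Int.gcd p n = 1 ↔ ¬(p : ℤ) ∣ n := by
  rw [Int.gcd_eq_natAbs, Int.natAbs_natCast, Int.natCast_dvd]
  exact hp.coprime_iff_not_dvd

theorem Nat.Prime.dvd_two_pow_mul_iff {p : ℕ} (hp : p.Prime) (hp2 : p ≠ 2) (m : ℕ) {x : ℤ} :
    (p : ℤ) ∣ 2 ^ m * x ↔ (p : ℤ) ∣ x := by
  have hpZ := Nat.prime_iff_prime_int.mp hp
  refine ⟨fun h => (hpZ.dvd_mul.mp h).resolve_left fun h2 => hp2 ?_, fun h => h.mul_left _⟩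
  exact (Nat.prime_dvd_prime_iff_eq hp Nat.prime_two).mp (by exact_mod_cast hpZ.dvd_of_dvd_pow h2)

theorem natCast_dvd_prod_primeFactors_filter_iff {p n : ℕ} (hp : p.Prime) (Q : ℕ → Prop)
    [DecidablePred Q] : (p : ℤ) ∣ ∏ r ∈ n.primeFactors.filter Q, (r : ℤ) ↔
      p ∈ n.primeFactors.filter Q := by
  refine ⟨fun h => ?_, fun h => dvd_prod_of_mem _ h⟩
  obtain ⟨r, hr, hpr⟩ := ((Nat.prime_iff_prime_int.mp hp).dvd_finsetProd_iff _).mp h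
  have hr' := Nat.prime_of_mem_primeFactors (mem_filter.mp hr).1
  rwa [(Nat.prime_dvd_prime_iff_eq hp hr').mp (Int.natCast_dvd_natCast.mp hpr)]

theorem natCast_dvd_prod_prod_primeFactors_iff {ι κ : Type*} [Fintype ι] [Fintype κ]
    {d : ι → κ → ℤ} (hd : ∀ k ℓ, d k ℓ ≠ 0) (N : ι → ℤ) {p : ℕ} (hp : p.Prime) :
    (p : ℤ) ∣ ∏ k, ∏ ℓ, ∏ r ∈ (d k ℓ).natAbs.primeFactors.filter
        (fun r : ℕ => Int.gcd (r : ℤ) (N k) = 1), (r : ℤ) ↔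
      ∃ k ℓ, (p : ℤ) ∣ d k ℓ ∧ ¬(p : ℤ) ∣ N k := by
  have hpZ := Nat.prime_iff_prime_int.mp hp
  simp only [hpZ.dvd_finsetProd_iff (S := (univ : Finset ι)),
    hpZ.dvd_finsetProd_iff (S := (univ : Finset κ)), mem_univ, true_and,
    natCast_dvd_prod_primeFactors_filter_iff hp, mem_filter, Nat.mem_primeFactors,
    hp.int_gcd_eq_one_iff, ← Int.natCast_dvd, ne_eq, Int.natAbs_eq_zero, hd, not_false_eq_true,
    hp, true_and, and_true]

theorem Equiv.Perm.exists_apply_eq_and_apply_eq {α : Type*} [DecidableEq α] {i j ℓ m : α}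
    (hij : i ≠ j) (hℓm : ℓ ≠ m) : ∃ σ : Perm α, σ i = ℓ ∧ σ j = m := by
  have hj : swap i ℓ j ≠ ℓ := by
    simpa only [swap_apply_left] using (swap i ℓ).injective.ne hij.symm
  exact ⟨swap (swap i ℓ j) m * swap i ℓ, by simp [swap_apply_of_ne_of_ne hj.symm hℓm], by simp⟩

theorem Int.gcd_eq_one_of_sum_fin_three_eq_zero {x : Fin 3 → ℤ} (hx : ∑ t, x t = 0)
    (h01 : Int.gcd (x 0) (x 1) = 1) {s t : Fin 3} (hst : s ≠ t) : Int.gcd (x s) (x t) = 1 := by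
  have h2 : x 2 = -(x 0 + x 1) := by rw [Fin.sum_univ_three] at hx; linarith
  have h02 : Int.gcd (x 0) (x 2) = 1 := by rwa [h2, Int.gcd_neg, Int.gcd_self_add_right]
  have h12 : Int.gcd (x 1) (x 2) = 1 := by
    rwa [h2, Int.gcd_neg, Int.gcd_add_self_right, Int.gcd_comm]
  fin_cases s <;> fin_cases t <;> first | exact absurd rfl hst | assumption | rwa [Int.gcd_comm]

theorem gcd_sub_eq_one_of_eschenburg_s6 {a b : Fin 3 → ℤ}
    (hfree : ∀ σ : Perm (Fin 3), Int.gcd (a 0 - b (σ 0)) (a 1 - b (σ 1)) = 1)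
    (hsum : a 0 + a 1 + a 2 = b 0 + b 1 + b 2) {i j ℓ m : Fin 3} (hij : i ≠ j) (hℓm : ℓ ≠ m) :
    Int.gcd (a i - b ℓ) (a j - b m) = 1 := by
  obtain ⟨σ, rfl, rfl⟩ := Perm.exists_apply_eq_and_apply_eq hij hℓm
  refine Int.gcd_eq_one_of_sum_fin_three_eq_zero (x := fun t => a t - b (σ t)) ?_ (hfree σ) hij
  rw [sum_sub_distrib, Equiv.sum_comp σ b, Fin.sum_univ_three, Fin.sum_univ_three, hsum, sub_self]

theorem of_forall_lt_of_swap_of_symm {α : Type*} [LinearOrder α] {F : α → α → α → α → Prop}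
    (hswap : ∀ i j k l, F i j k l → F j i k l) (hsymm : ∀ i j k l, F i j k l → F k l i j)
    (h : ∀ i j k l, i < j → k < l → i < k → j ≠ k → j ≠ l → F i j k l) {i j k l : α}
    (hij : i ≠ j) (hik : i ≠ k) (hil : i ≠ l) (hjk : j ≠ k) (hjl : j ≠ l) (hkl : k ≠ l) :
    F i j k l := by
  wlog hij' : i < j generalizing i j
  · exact hswap _ _ _ _ (this hij.symm hjk hjl hik hil (hij.symm.lt_of_le (not_lt.mp hij')))
  wlog hkl' : k < l generalizing k l
  · exact hsymm _ _ _ _ (hswap _ _ _ _ (hsymm _ _ _ _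
      (this hkl.symm hil hik hjl hjk (hkl.symm.lt_of_le (not_lt.mp hkl')))))
  wlog hik' : i < k generalizing i j k l
  · exact hsymm _ _ _ _ (this hkl hkl' hij hik.symm hjk.symm hil.symm hjl.symm hij'
      (hik.symm.lt_of_le (not_lt.mp hik')))
  exact h i j k l hij' hkl' hik' hjk hjl

section Eschenburg

variable {a b : Fin 3 → ℤ}

theorem not_two_dvd_sum_sub_add_one_of_two_dvd_sub
    (hcop : ∀ i j ℓ m : Fin 3, i ≠ j → ℓ ≠ m → Int.gcd (a i - b ℓ) (a j - b m) = 1)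
    {k ℓ : Fin 3} (h : 2 ∣ a k - b ℓ) : ¬2 ∣ a 0 + a 1 + a 2 - a k + 1 := by
  obtain ⟨m, hm⟩ : ∃ m, ℓ ≠ m := ⟨ℓ + 1, by fin_cases ℓ <;> decide⟩
  have hodd : ∀ i, k ≠ i → (a i - b m) % 2 = 1 := fun i hi => Int.two_dvd_ne_zero.mp <| by
    exact_mod_cast Nat.prime_two.not_dvd_of_gcd_eq_one (hcop _ _ _ _ hi hm) (by exact_mod_cast h)
  have h0 := hodd 0
  have h1 := hodd 1
  have h2 := hodd 2
  rw [Int.two_dvd_ne_zero]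
  fin_cases k <;>
    simp only [Fin.zero_eta, Fin.mk_one, Fin.reduceFinMk, Fin.isValue, ne_eq, Fin.reduceEq,
      not_false_eq_true, forall_const, not_true_eq_false, IsEmpty.forall_iff] at h0 h1 h2 ⊢ <;>
    omega

theorem dvd_sum_sub_add_one_of_dvd_sub
    (hcop : ∀ i j ℓ m : Fin 3, i ≠ j → ℓ ≠ m → Int.gcd (a i - b ℓ) (a j - b m) = 1)
    {p : ℕ} (hp : p.Prime) {k ℓ k' ℓ' : Fin 3} (hN : (p : ℤ) ∣ a 0 + a 1 + a 2 - a k + 1)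
    (hd : (p : ℤ) ∣ a k - b ℓ) (hd' : (p : ℤ) ∣ a k' - b ℓ') :
    (p : ℤ) ∣ a 0 + a 1 + a 2 - a k' + 1 := by
  obtain rfl | hk := eq_or_ne k k'
  · exact hN
  obtain rfl | hℓ := eq_or_ne ℓ ℓ'
  · have h : a 0 + a 1 + a 2 - a k' + 1 =
        a 0 + a 1 + a 2 - a k + 1 + ((a k - b ℓ) - (a k' - b ℓ)) := by
      ring
    exact h ▸ dvd_add hN (dvd_sub hd hd')
  · exact absurd hd' (hp.not_dvd_of_gcd_eq_one (hcop _ _ _ _ hk hℓ) hd)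

theorem gcd_sum_sub_add_one_add_two_mul_eq_one
    (hcop : ∀ i j ℓ m : Fin 3, i ≠ j → ℓ ≠ m → Int.gcd (a i - b ℓ) (a j - b m) = 1)
    {c : ℤ} (hc : ∀ p : ℕ, p.Prime → p ≠ 2 → ((p : ℤ) ∣ c ↔
      ∃ k ℓ, (p : ℤ) ∣ a k - b ℓ ∧ ¬(p : ℤ) ∣ a 0 + a 1 + a 2 - a k + 1)) (k ℓ : Fin 3) :
    Int.gcd (a 0 + a 1 + a 2 - a k + 1 + 2 * c) (a k - b ℓ) = 1 := by
  refine Int.gcd_eq_one_of_forall_prime_not_dvd fun p hp hx hy => ?_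
  obtain rfl | hp2 := eq_or_ne p 2
  · exact not_two_dvd_sum_sub_add_one_of_two_dvd_sub hcop (by exact_mod_cast hy)
      ((dvd_add_left (dvd_mul_right 2 c)).mp (by exact_mod_cast hx))
  have hN : (p : ℤ) ∣ a 0 + a 1 + a 2 - a k + 1 ↔ (p : ℤ) ∣ c := by
    have h2c : (p : ℤ) ∣ 2 * c ↔ (p : ℤ) ∣ c := by simpa using hp.dvd_two_pow_mul_iff hp2 1
    rw [← h2c]
    exact ⟨fun h => (dvd_add_right h).mp hx, fun h => (dvd_add_left h).mp hx⟩
  by_cases hpN : (p : ℤ) ∣ a 0 + a 1 + a 2 - a k + 1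
  · obtain ⟨k', ℓ', hd', hN'⟩ := (hc p hp hp2).mp (hN.mp hpN)
    exact hN' (dvd_sum_sub_add_one_of_dvd_sub hcop hp hpN hy hd')
  · exact hpN (hN.mpr ((hc p hp hp2).mpr ⟨k, ℓ, hy, hpN⟩))

end Eschenburg

def bazaikinTuple (a b : Fin 3 → ℤ) (c : ℤ) : Fin 5 → ℤ :=
  ![2 * (a 0 + c) + 1, 2 * (a 1 + c) + 1, 2 * (a 2 + c) + 1,
    -(2 * (b 1 + c) + 1), -(2 * (b 2 + c) + 1)]

theorem odd_bazaikinTuple (a b : Fin 3 → ℤ) (c : ℤ) (i : Fin 5) : Odd (bazaikinTuple a b c i) := by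
  fin_cases i <;> simp only [bazaikinTuple, Fin.isValue] <;>
    first | exact odd_two_mul_add_one _ | exact (odd_two_mul_add_one _).neg

theorem Int.gcd_eq_two_of_gcd_eq_one {x y u v : ℤ} (h : Int.gcd u v = 1) (hx : x = 2 * u)
    (hy : y = 2 * v) : Int.gcd x y = 2 := by
  rw [hx, hy, Int.gcd_mul_left, h]
  rfl

theorem gcd_bazaikinTuple_add_eq_two {a b : Fin 3 → ℤ} {c : ℤ}
    (hsum : a 0 + a 1 + a 2 = b 0 + b 1 + b 2)
    (hcop : ∀ i j ℓ m : Fin 3, i ≠ j → ℓ ≠ m → Int.gcd (a i - b ℓ) (a j - b m) = 1)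
    (hcopN : ∀ k ℓ, Int.gcd (a 0 + a 1 + a 2 - a k + 1 + 2 * c) (a k - b ℓ) = 1)
    {i j k l : Fin 5} (hij : i ≠ j) (hik : i ≠ k) (hil : i ≠ l) (hjk : j ≠ k) (hjl : j ≠ l)
    (hkl : k ≠ l) :
    Int.gcd (bazaikinTuple a b c i + bazaikinTuple a b c j)
      (bazaikinTuple a b c k + bazaikinTuple a b c l) = 2 := by
  set q := bazaikinTuple a b c with hq
  refine of_forall_lt_of_swap_of_symm (F := fun i j k l => Int.gcd (q i + q j) (q k + q l) = 2)
    (fun i j k l h => by rwa [add_comm]) (fun i j k l h => by rwa [Int.gcd_comm]) ?_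
    hij hik hil hjk hjl hkl
  have hBB (k : Fin 3) :
      Int.gcd (a 0 + a 1 + a 2 - a k + 1 + 2 * c) (-(b 1 + b 2 + 2 * c + 1)) = 1 := by
    have h : b 1 + b 2 + 2 * c + 1 = a 0 + a 1 + a 2 - a k + 1 + 2 * c + (a k - b 0) := by
      linear_combination -hsum
    rw [h, Int.gcd_neg, Int.gcd_self_add_right, hcopN]
  have hcopN' (k ℓ : Fin 3) := (Int.gcd_comm _ _).trans (hcopN k ℓ)
  intro i j k l hij hkl hik hjk hjl
  fin_cases i <;> fin_cases j <;> fin_cases k <;> fin_cases l <;>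
    simp only [Fin.reduceFinMk, Fin.reduceLT, Fin.isValue, ne_eq, not_true_eq_false, Fin.reduceEq]
      at hij hkl hik hjk hjl
  -- the fifteen splittings of four of the five indices into two pairs
  all_goals simp only [hq, bazaikinTuple, Fin.reduceFinMk, Fin.isValue, Matrix.cons_val]
  · exact Int.gcd_eq_two_of_gcd_eq_one (hcopN 2 1) (by ring) (by ring)
  · exact Int.gcd_eq_two_of_gcd_eq_one (hcopN 2 2) (by ring) (by ring)
  · exact Int.gcd_eq_two_of_gcd_eq_one (hBB 2) (by ring) (by ring)
  · exact Int.gcd_eq_two_of_gcd_eq_one (hcopN 1 1) (by ring) (by ring)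
  · exact Int.gcd_eq_two_of_gcd_eq_one (hcopN 1 2) (by ring) (by ring)
  · exact Int.gcd_eq_two_of_gcd_eq_one (hBB 1) (by ring) (by ring)
  · exact Int.gcd_eq_two_of_gcd_eq_one (hcopN' 0 1) (by ring) (by ring)
  · exact Int.gcd_eq_two_of_gcd_eq_one (hcop 0 1 1 2 (by decide) (by decide)) (by ring) (by ring)
  · exact Int.gcd_eq_two_of_gcd_eq_one (hcop 0 2 1 2 (by decide) (by decide)) (by ring) (by ring)
  · exact Int.gcd_eq_two_of_gcd_eq_one (hcopN' 0 2) (by ring) (by ring)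
  · exact Int.gcd_eq_two_of_gcd_eq_one (hcop 0 1 2 1 (by decide) (by decide)) (by ring) (by ring)
  · exact Int.gcd_eq_two_of_gcd_eq_one (hcop 0 2 2 1 (by decide) (by decide)) (by ring) (by ring)
  · exact Int.gcd_eq_two_of_gcd_eq_one (hBB 0) (by ring) (by ring)
  · exact Int.gcd_eq_two_of_gcd_eq_one (hcop 1 2 1 2 (by decide) (by decide)) (by ring) (by ring)
  · exact Int.gcd_eq_two_of_gcd_eq_one (hcop 1 2 2 1 (by decide) (by decide)) (by ring) (by ring)

/-- **Corollary: non-singular Bazaikin biquotients.**  Let `a`, `b` satisfy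
the Eschenburg freeness condition, `a₁+a₂+a₃ = b₁+b₂+b₃`, and `a_k ≠ b_ℓ` for all `k, ℓ`.
Let `P` be the product, over all pairs `(k,ℓ)`, of the product of all primes `p` dividing
`a_k − b_ℓ` with `gcd(p, aᵢ+aⱼ+1) = 1` (where `{i,j,k} = {1,2,3}`).  Then for every
`μ ≥ 1` and `c = ±2^{μ−1}·P^μ`, all entries of the tuple
`q^c = (2(a₁+c)+1, 2(a₂+c)+1, 2(a₃+c)+1, −(2(b₂+c)+1), −(2(b₃+c)+1))` are odd and `q^c`
satisfies the Bazaikin freeness condition. -/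
theorem bazaikin_nonsingular_for_special_c (a b : Fin 3 → ℤ)
    (hfree : ∀ σ : Equiv.Perm (Fin 3), Int.gcd (a 0 - b (σ 0)) (a 1 - b (σ 1)) = 1)
    (hsum : a 0 + a 1 + a 2 = b 0 + b 1 + b 2)
    (hne : ∀ k ℓ : Fin 3, a k ≠ b ℓ)
    (P : ℤ)
    (hP : P = ∏ k : Fin 3, ∏ ℓ : Fin 3,
      ∏ p ∈ (a k - b ℓ).natAbs.primeFactors.filter
        (fun (p : ℕ) => Int.gcd (p : ℤ) (a 0 + a 1 + a 2 - a k + 1) = 1), (p : ℤ))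
    (μ : ℕ) (hμ : 1 ≤ μ) (c : ℤ)
    (hc : c = 2 ^ (μ - 1) * P ^ μ ∨ c = -(2 ^ (μ - 1) * P ^ μ))
    (q : Fin 5 → ℤ)
    (hq : q = ![2 * (a 0 + c) + 1, 2 * (a 1 + c) + 1, 2 * (a 2 + c) + 1,
      -(2 * (b 1 + c) + 1), -(2 * (b 2 + c) + 1)]) :
    (∀ i : Fin 5, Odd (q i)) ∧
    (∀ σ : Equiv.Perm (Fin 5),
      Int.gcd (q (σ 0) + q (σ 1)) (q (σ 2) + q (σ 3)) = 2) := by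
  have hcop : ∀ i j ℓ m : Fin 3, i ≠ j → ℓ ≠ m → Int.gcd (a i - b ℓ) (a j - b m) = 1 :=
    fun _ _ _ _ => gcd_sub_eq_one_of_eschenburg_s6 hfree hsum
  have hcP (p : ℕ) (hp : p.Prime) (hp2 : p ≠ 2) : (p : ℤ) ∣ c ↔ (p : ℤ) ∣ P := by
    rcases hc with rfl | rfl <;>
      simp only [dvd_neg, hp.dvd_two_pow_mul_iff hp2,
        (Nat.prime_iff_prime_int.mp hp).dvd_pow_iff_dvd (by omega : μ ≠ 0)]
  have hc' (p : ℕ) (hp : p.Prime) (hp2 : p ≠ 2) : (p : ℤ) ∣ c ↔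
      ∃ k ℓ, (p : ℤ) ∣ a k - b ℓ ∧ ¬(p : ℤ) ∣ a 0 + a 1 + a 2 - a k + 1 := by
    rw [hcP p hp hp2, hP]
    exact natCast_dvd_prod_prod_primeFactors_iff (fun k ℓ => sub_ne_zero.mpr (hne k ℓ)) _ hp
  have hcopN := gcd_sum_sub_add_one_add_two_mul_eq_one hcop hc'
  subst hq
  refine ⟨odd_bazaikinTuple a b c, fun σ => ?_⟩
  have hσ {s t : Fin 5} (hst : s ≠ t) : σ s ≠ σ t := σ.injective.ne hst
  exact gcd_bazaikinTuple_add_eq_two hsum hcop hcopN (hσ (by decide)) (hσ (by decide))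
    (hσ (by decide)) (hσ (by decide)) (hσ (by decide)) (hσ (by decide))
end

section
/- Let a = (a₁,a₂,a₃), b = (b₁,b₂,b₃) ∈ ℤ³ satisfy σ₁(a) = σ₁(b), and let c ∈ ℤ. Then the third elementary symmetric polynomial of the 6-tuple q_c equals 8(σ₃(a) − σ₃(b)) − 8(σ₁(a) + 2c + 1)(σ₂(a) − σ₂(b)). -/
/-!
Split `q` as the concatenation of `u = 2a + (2c+1)` and `-v` with `v = 2b + (2c+1)`. Elementary
symmetric functions of a concatenation form a Cauchy product and `σₖ(-v) = (-1)ᵏ σₖ(v)`, so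
`σ₃(q) = σ₃(u) - σ₂(u)σ₁(v) + σ₁(u)σ₂(v) - σ₃(v)`. Expanding the `σₖ` of the affine images `u`, `v`
in terms of those of `a`, `b` and using `σ₁(a) = σ₁(b)` gives the formula.
-/

/-- The `k`-th elementary symmetric polynomial of the entries of a tuple `x : Fin n → ℤ`. -/
def esymm {n : ℕ} (k : ℕ) (x : Fin n → ℤ) : ℤ :=
  ∑ s ∈ Finset.powersetCard k (Finset.univ : Finset (Fin n)), ∏ i ∈ s, x i

open Finset

section CommSemiring

variable {R : Type*} [CommSemiring R]

theorem Multiset.esymm_zero (s : Multiset R) : s.esymm 0 = 1 := by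
  simp [Multiset.esymm, Multiset.powersetCard_zero_left]

theorem Multiset.esymm_zero_succ (k : ℕ) : (0 : Multiset R).esymm (k + 1) = 0 := by
  simp [Multiset.esymm, Multiset.powersetCard_zero_right]

theorem Multiset.esymm_cons_succ (a : R) (s : Multiset R) (k : ℕ) :
    (a ::ₘ s).esymm (k + 1) = s.esymm (k + 1) + a * s.esymm k := by
  simp only [Multiset.esymm, Multiset.powersetCard_cons, Multiset.map_add, Multiset.sum_add,
    Multiset.map_map, Function.comp_def, Multiset.prod_cons, Multiset.sum_map_mul_left]

theorem Multiset.esymm_add (s t : Multiset R) (n : ℕ) :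
    (s + t).esymm n = ∑ p ∈ HasAntidiagonal.antidiagonal n, s.esymm p.1 * t.esymm p.2 := by
  induction s using Multiset.induction_on generalizing n with
  | empty =>
    cases n with
    | zero => simp [esymm_zero]
    | succ k => simp [Nat.sum_antidiagonal_succ, esymm_zero, esymm_zero_succ]
  | cons a s ih =>
    cases n with
    | zero => simp [esymm_zero]
    | succ k =>
      rw [cons_add, esymm_cons_succ, ih, ih, Nat.sum_antidiagonal_succ,
        Nat.sum_antidiagonal_succ]
      simp only [esymm_zero, esymm_cons_succ, add_mul, sum_add_distrib, mul_sum, mul_assoc]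
      ring

end CommSemiring

theorem esymm_eq_multiset_esymm {n : ℕ} (k : ℕ) (x : Fin n → ℤ) :
    esymm k x = (univ.val.map x).esymm k :=
  (esymm_map_val x _ k).symm

theorem esymm_append {m n : ℕ} (k : ℕ) (u : Fin m → ℤ) (v : Fin n → ℤ) :
    esymm k (Fin.append u v) = ∑ p ∈ antidiagonal k, esymm p.1 u * esymm p.2 v := by
  simp only [esymm_eq_multiset_esymm, Fin.univ_val_map, List.ofFn_fin_append,
    ← Multiset.coe_add, Multiset.esymm_add]

theorem esymm_neg {n : ℕ} (k : ℕ) (x : Fin n → ℤ) : esymm k (-x) = (-1) ^ k * esymm k x := by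
  rw [esymm_eq_multiset_esymm, esymm_eq_multiset_esymm, ← Multiset.esymm_neg, Multiset.map_map]
  rfl

theorem esymm_zero {n : ℕ} (x : Fin n → ℤ) : esymm 0 x = 1 := by
  simp [esymm]

theorem esymm_fin_three (x : Fin 3 → ℤ) :
    esymm 1 x = x 0 + x 1 + x 2 ∧ esymm 2 x = x 0 * x 1 + x 0 * x 2 + x 1 * x 2 ∧
      esymm 3 x = x 0 * x 1 * x 2 := by
  simp only [esymm_eq_multiset_esymm, Fin.univ_val_map, List.ofFn_succ, List.ofFn_zero,
    ← Multiset.cons_coe, Multiset.coe_nil, Multiset.esymm_cons_succ, Multiset.esymm_zero,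
    Multiset.esymm_zero_succ, Fin.succ_zero_eq_one, Fin.succ_one_eq_two]
  refine ⟨?_, ?_, ?_⟩ <;> ring

theorem esymm_fin_three_affine (x : Fin 3 → ℤ) (s t : ℤ) :
    esymm 1 (fun i => s * x i + t) = s * esymm 1 x + 3 * t ∧
    esymm 2 (fun i => s * x i + t) = s ^ 2 * esymm 2 x + 2 * s * t * esymm 1 x + 3 * t ^ 2 ∧
    esymm 3 (fun i => s * x i + t) =
      s ^ 3 * esymm 3 x + s ^ 2 * t * esymm 2 x + s * t ^ 2 * esymm 1 x + t ^ 3 := by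
  obtain ⟨h1, h2, h3⟩ := esymm_fin_three x
  obtain ⟨h1', h2', h3'⟩ := esymm_fin_three (fun i => s * x i + t)
  refine ⟨?_, ?_, ?_⟩ <;> simp only [h1, h2, h3, h1', h2', h3'] <;> ring

theorem esymm_three_append_neg {m n : ℕ} (u : Fin m → ℤ) (v : Fin n → ℤ) :
    esymm 3 (Fin.append u (-v)) =
      esymm 3 u - esymm 2 u * esymm 1 v + esymm 1 u * esymm 2 v - esymm 3 v := by
  simp only [esymm_append, Nat.sum_antidiagonal_succ, Nat.antidiagonal_zero, sum_singleton,
    esymm_neg, esymm_zero]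
  ring

/-- If `σ₁(a) = σ₁(b)` and `c ∈ ℤ`, then for the 6-tuple
`q_c = (2(a₁+c)+1, 2(a₂+c)+1, 2(a₃+c)+1, −2(b₁+c)−1, −2(b₂+c)−1, −2(b₃+c)−1)` one has
`σ₃(q_c) = 8(σ₃(a) − σ₃(b)) − 8(σ₁(a) + 2c + 1)(σ₂(a) − σ₂(b))`. -/
theorem esymm_three_of_q (a b : Fin 3 → ℤ)
    (hsum : esymm 1 a = esymm 1 b) (c : ℤ) (q : Fin 6 → ℤ)
    (hq : q = ![2 * (a 0 + c) + 1, 2 * (a 1 + c) + 1, 2 * (a 2 + c) + 1,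
      -2 * (b 0 + c) - 1, -2 * (b 1 + c) - 1, -2 * (b 2 + c) - 1]) :
    esymm 3 q =
      8 * (esymm 3 a - esymm 3 b) - 8 * (esymm 1 a + 2 * c + 1) * (esymm 2 a - esymm 2 b) := by
  have hq_append :
      q = Fin.append (fun i => 2 * a i + (2 * c + 1)) (-fun i => 2 * b i + (2 * c + 1)) := by
    subst hq
    ext i
    fin_cases i <;> simp [Fin.append, Fin.addCases] <;> ring
  obtain ⟨ha1, ha2, ha3⟩ := esymm_fin_three_affine a 2 (2 * c + 1)
  obtain ⟨hb1, hb2, hb3⟩ := esymm_fin_three_affine b 2 (2 * c + 1)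
  rw [hq_append, esymm_three_append_neg, ha1, ha2, ha3, hb1, hb2, hb3]
  -- the two sides differ by `(σ₁(a) - σ₁(b)) * (8 σ₂(a) - 4 (2c+1)²)`
  linear_combination (8 * esymm 2 a - 4 * (2 * c + 1) ^ 2) * hsum
end

section
/- Let a = (a₁,a₂,a₃), b = (b₁,b₂,b₃) ∈ ℤ³ satisfy the Eschenburg freeness condition and a₁+a₂+a₃ = b₁+b₂+b₃. Then σ₂(a) − σ₂(b) is odd; in particular σ₂(a) ≠ σ₂(b). -/
/-! Reduce mod 2. For a vector of bits with `p` ones, `σ₁ ≡ p` and `σ₂ ≡ C(p, 2)` are the two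
binary digits of `p ≤ 3`, so equal `σ₁` and `σ₂` mod 2 would make the parity vectors of `a` and
`b` permutations of each other. A permutation `σ` matching parities makes `a₁ - b_{σ(1)}` and
`a₂ - b_{σ(2)}` both even, contradicting the freeness condition. -/

theorem esymm_two_fin_three (x : Fin 3 → ℤ) :
    esymm 2 x = x 0 * x 1 + x 0 * x 2 + x 1 * x 2 := by
  have hpairs : Finset.powersetCard 2 (Finset.univ : Finset (Fin 3)) =
      {{0, 1}, {0, 2}, {1, 2}} := by
    decide
  rw [esymm, hpairs, Finset.sum_insert (by decide), Finset.sum_pair (by decide),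
    Finset.prod_pair (by decide), Finset.prod_pair (by decide), Finset.prod_pair (by decide)]
  ring

theorem ZMod.exists_perm_of_sum_eq_of_esymm_two_eq (x y : Fin 3 → ZMod 2)
    (hsum : x 0 + x 1 + x 2 = y 0 + y 1 + y 2)
    (hesymm : x 0 * x 1 + x 0 * x 2 + x 1 * x 2 = y 0 * y 1 + y 0 * y 2 + y 1 * y 2) :
    ∃ σ : Equiv.Perm (Fin 3), ∀ i, y (σ i) = x i := by
  revert x y
  decide

theorem Int.not_even_and_even_of_gcd_eq_one {x y : ℤ} (h : Int.gcd x y = 1) :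
    ¬(Even x ∧ Even y) := by
  rintro ⟨hx, hy⟩
  have h2 := Int.dvd_coe_gcd (even_iff_two_dvd.mp hx) (even_iff_two_dvd.mp hy)
  rw [h] at h2
  norm_num at h2

/-- If `a`, `b` satisfy the Eschenburg freeness condition and
`a₁+a₂+a₃ = b₁+b₂+b₃`, then `σ₂(a) − σ₂(b)` is odd; in particular `σ₂(a) ≠ σ₂(b)`. -/
theorem esymm_two_sub_odd (a b : Fin 3 → ℤ)
    (hfree : ∀ σ : Equiv.Perm (Fin 3), Int.gcd (a 0 - b (σ 0)) (a 1 - b (σ 1)) = 1)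
    (hsum : a 0 + a 1 + a 2 = b 0 + b 1 + b 2) :
    Odd (esymm 2 a - esymm 2 b) ∧ esymm 2 a ≠ esymm 2 b := by
  have hodd : Odd (esymm 2 a - esymm 2 b) := by
    rw [← Int.not_even_iff_odd, ← ZMod.intCast_eq_zero_iff_even, Int.cast_sub, sub_eq_zero,
      esymm_two_fin_three, esymm_two_fin_three]
    intro hesymm
    push_cast at hesymm
    have hsum2 := congrArg (fun z : ℤ => (z : ZMod 2)) hsum
    push_cast at hsum2
    obtain ⟨σ, hσ⟩ := ZMod.exists_perm_of_sum_eq_of_esymm_two_eq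
      (fun i => (a i : ZMod 2)) (fun i => (b i : ZMod 2)) hsum2 hesymm
    have heven : ∀ i, Even (a i - b (σ i)) := fun i => by
      rw [← ZMod.intCast_eq_zero_iff_even, Int.cast_sub, hσ i, sub_self]
    exact Int.not_even_and_even_of_gcd_eq_one (hfree σ) ⟨heven 0, heven 1⟩
  exact ⟨hodd, fun h => by simp [h] at hodd⟩
end

section
/- Let a = (a₁,a₂,a₃), b = (b₁,b₂,b₃) ∈ ℤ³ satisfy a₁+a₂+a₃ = b₁+b₂+b₃, and suppose gcd(aᵢ+aⱼ+1, a_k−b_ℓ) = 1 for all indices with {i,j,k} = {1,2,3} and all ℓ ∈ {1,2,3}. Then also gcd(bᵢ+bⱼ+1, b_k−a_ℓ) = 1 for all indices with {i,j,k} = {1,2,3} and all ℓ ∈ {1,2,3}. -/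
/-! With `S = a₁ + a₂ + a₃ = b₁ + b₂ + b₃`, the pair sums are `aᵢ + aⱼ = S - a_k` and
`bᵢ + bⱼ = S - b_k`. Since `S + 1 - b_k ≡ S + 1 - a_ℓ` modulo `a_ℓ - b_k`, the gcd
`gcd(S + 1 - b_k, b_k - a_ℓ)` equals `gcd(S + 1 - a_ℓ, a_ℓ - b_k)`, which is one of the
hypotheses (with the roles of `k` and `ℓ` exchanged). -/

theorem Int.gcd_sub_sub_comm (c u v : ℤ) : Int.gcd (c - u) (u - v) = Int.gcd (c - v) (v - u) := by
  rw [← Int.gcd_neg, neg_sub, ← Int.gcd_add_self_left (v - u) (c - v)]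
  ring_nf

theorem Fin.add_add_comp_perm_three {M : Type*} [AddCommMonoid M] (c : Fin 3 → M)
    (σ : Equiv.Perm (Fin 3)) : c (σ 0) + c (σ 1) + c (σ 2) = c 0 + c 1 + c 2 := by
  simpa only [Fin.sum_univ_three] using Equiv.sum_comp σ c

theorem Fin.add_comp_perm_three_eq_sub {G : Type*} [AddCommGroup G] (c : Fin 3 → G)
    (σ : Equiv.Perm (Fin 3)) : c (σ 0) + c (σ 1) = c 0 + c 1 + c 2 - c (σ 2) :=
  eq_sub_of_add_eq (Fin.add_add_comp_perm_three c σ)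

/-- If `a₁+a₂+a₃ = b₁+b₂+b₃` and `gcd(aᵢ+aⱼ+1, a_k−b_ℓ) = 1` for all
indices with `{i,j,k} = {1,2,3}` and all `ℓ ∈ {1,2,3}`, then also
`gcd(bᵢ+bⱼ+1, b_k−a_ℓ) = 1` for all such indices. -/
theorem nonsingular_swap (a b : Fin 3 → ℤ)
    (hsum : a 0 + a 1 + a 2 = b 0 + b 1 + b 2)
    (h : ∀ σ : Equiv.Perm (Fin 3), ∀ ℓ : Fin 3,
      Int.gcd (a (σ 0) + a (σ 1) + 1) (a (σ 2) - b ℓ) = 1) :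
    ∀ σ : Equiv.Perm (Fin 3), ∀ ℓ : Fin 3,
      Int.gcd (b (σ 0) + b (σ 1) + 1) (b (σ 2) - a ℓ) = 1 := by
  intro σ ℓ
  have hτ : Equiv.swap 2 ℓ 2 = ℓ := Equiv.swap_apply_left 2 ℓ
  have ha := h (Equiv.swap 2 ℓ) (σ 2)
  rw [Fin.add_comp_perm_three_eq_sub, hτ] at ha
  rw [Fin.add_comp_perm_three_eq_sub, ← hsum]
  calc Int.gcd (a 0 + a 1 + a 2 - b (σ 2) + 1) (b (σ 2) - a ℓ)
      = Int.gcd ((a 0 + a 1 + a 2 + 1) - b (σ 2)) (b (σ 2) - a ℓ) := by ring_nf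
    _ = Int.gcd ((a 0 + a 1 + a 2 + 1) - a ℓ) (a ℓ - b (σ 2)) := Int.gcd_sub_sub_comm _ _ _
    _ = 1 := by rw [← ha]; ring_nf
end

section
/- For every integer k ≥ 0, the triples a = (15015k + 39, 0, 0) and b = (15015k + 55, −3, −13) satisfy the Eschenburg freeness condition and a₁+a₂+a₃ = b₁+b₂+b₃, and for every integer c with −(a₂ + a₃ + 1) < 2c < −(b₂ + b₃ + 1) (equivalently, 0 ≤ c ≤ 7) there exist indices with {i,j,k'} = {1,2,3} and ℓ ∈ {1,2,3} such that gcd(aᵢ + aⱼ + 1 + 2c, a_{k'} − b_ℓ) ≠ 1. -/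
/-!
Write `N = 15015 k`, where `15015 = 3 · 5 · 7 · 11 · 13`. The six freeness gcds are `gcd(16, 3)`,
`gcd(16, 13)` and, since `N + 55` exceeds `N + 42` by `13` and `N + 52` by `3`, the values
`gcd(N + 42, 13)` and `gcd(N + 52, 3)`, each twice; these are `1` because `13 ∤ 42` and `3 ∤ 52`.
For each `0 ≤ c ≤ 7` some prime `p ∣ 15015` divides one of the pairs `(N + 40 + 2c, N + 55)`
(`p = 5, 11`), `(1 + 2c, N + 42)` (`p = 3, 7`) or `(1 + 2c, N + 52)` (`p = 13`).
-/

open Equiv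

def EschenburgFree (a b : Fin 3 → ℤ) : Prop :=
  ∀ σ : Perm (Fin 3), Int.gcd (a 0 - b (σ 0)) (a 1 - b (σ 1)) = 1

def GcdObstructed (a b : Fin 3 → ℤ) (c : ℤ) : Prop :=
  ∃ σ : Perm (Fin 3), ∃ ℓ : Fin 3, Int.gcd (a (σ 0) + a (σ 1) + 1 + 2 * c) (a (σ 2) - b ℓ) ≠ 1

theorem Int.gcd_ne_one_of_dvd_of_dvd {d : ℕ} (hd : 1 < d) {x y : ℤ} (hx : (d : ℤ) ∣ x)
    (hy : (d : ℤ) ∣ y) : x.gcd y ≠ 1 :=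
  Nat.not_coprime_of_dvd_of_dvd hd (Int.natCast_dvd.1 hx) (Int.natCast_dvd.1 hy)

theorem Int.gcd_natCast_eq_one_of_not_dvd {p : ℕ} (hp : p.Prime) {x : ℤ}
    (h : ¬(p : ℤ) ∣ x) : x.gcd p = 1 := by
  rw [Int.gcd_comm, Int.gcd_eq_natAbs, Int.natAbs_natCast]
  exact hp.coprime_iff_not_dvd.2 fun hpx => h (Int.natCast_dvd.2 hpx)

theorem Int.gcd_neg_add_self_right (m n : ℤ) : m.gcd (-(n + m)) = m.gcd n := by
  rw [Int.gcd_neg, Int.gcd_add_self_right]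

theorem GcdObstructed.of_dvd {a b : Fin 3 → ℤ} {c : ℤ} (σ : Perm (Fin 3)) (ℓ : Fin 3) {p : ℕ}
    (hp : 1 < p) (h₁ : (p : ℤ) ∣ a (σ 0) + a (σ 1) + 1 + 2 * c) (h₂ : (p : ℤ) ∣ a (σ 2) - b ℓ) :
    GcdObstructed a b c :=
  ⟨σ, ℓ, Int.gcd_ne_one_of_dvd_of_dvd hp h₁ h₂⟩

theorem eschenburgFree_of_dvd {N : ℤ} (h3 : 3 ∣ N) (h13 : 13 ∣ N) :
    EschenburgFree ![N + 39, 0, 0] ![N + 55, -3, -13] := by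
  have h42 : (N + 42).gcd 13 = 1 :=
    Int.gcd_natCast_eq_one_of_not_dvd (p := 13) (by norm_num) (by omega)
  have h52 : (N + 52).gcd 3 = 1 :=
    Int.gcd_natCast_eq_one_of_not_dvd (p := 3) (by norm_num) (by omega)
  intro σ
  have hne : σ 0 ≠ σ 1 := σ.injective.ne (by decide)
  generalize σ 0 = i at hne ⊢
  generalize σ 1 = j at hne ⊢
  fin_cases i <;> fin_cases j <;> simp only [ne_eq, not_true_eq_false] at hne
  · show (N + 39 - (N + 55)).gcd (0 - -3) = 1
    norm_num
  · show (N + 39 - (N + 55)).gcd (0 - -13) = 1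
    norm_num
  · show (N + 39 - -3).gcd (0 - (N + 55)) = 1
    rw [show N + 39 - -3 = N + 42 by ring, show 0 - (N + 55) = -(13 + (N + 42)) by ring,
      Int.gcd_neg_add_self_right, h42]
  · show (N + 39 - -3).gcd (0 - -13) = 1
    convert h42 using 2 <;> ring
  · show (N + 39 - -13).gcd (0 - (N + 55)) = 1
    rw [show N + 39 - -13 = N + 52 by ring, show 0 - (N + 55) = -(3 + (N + 52)) by ring,
      Int.gcd_neg_add_self_right, h52]
  · show (N + 39 - -13).gcd (0 - -3) = 1
    convert h52 using 2 <;> ring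

theorem gcdObstructed_of_dvd {N : ℤ} (hN : 15015 ∣ N) {c : ℤ} (hc₀ : 0 ≤ c) (hc₇ : c ≤ 7) :
    GcdObstructed ![N + 39, 0, 0] ![N + 55, -3, -13] c := by
  have via_b₀ (p : ℕ) (hp : 1 < p) (h₁ : (p : ℤ) ∣ N + 39 + 0 + 1 + 2 * c)
      (h₂ : (p : ℤ) ∣ 0 - (N + 55)) : GcdObstructed ![N + 39, 0, 0] ![N + 55, -3, -13] c :=
    .of_dvd 1 0 hp h₁ h₂
  have via_b₁ (p : ℕ) (hp : 1 < p) (h₁ : (p : ℤ) ∣ 0 + 0 + 1 + 2 * c)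
      (h₂ : (p : ℤ) ∣ N + 39 - -3) : GcdObstructed ![N + 39, 0, 0] ![N + 55, -3, -13] c :=
    .of_dvd (swap 0 2) 1 hp h₁ h₂
  have via_b₂ (p : ℕ) (hp : 1 < p) (h₁ : (p : ℤ) ∣ 0 + 0 + 1 + 2 * c)
      (h₂ : (p : ℤ) ∣ N + 39 - -13) : GcdObstructed ![N + 39, 0, 0] ![N + 55, -3, -13] c :=
    .of_dvd (swap 0 2) 2 hp h₁ h₂
  interval_cases c
  · exact via_b₀ 5 (by norm_num) (by omega) (by omega)
  · exact via_b₁ 3 (by norm_num) (by omega) (by omega)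
  · exact via_b₀ 11 (by norm_num) (by omega) (by omega)
  · exact via_b₁ 7 (by norm_num) (by omega) (by omega)
  · exact via_b₁ 3 (by norm_num) (by omega) (by omega)
  · exact via_b₀ 5 (by norm_num) (by omega) (by omega)
  · exact via_b₂ 13 (by norm_num) (by omega) (by omega)
  · exact via_b₁ 3 (by norm_num) (by omega) (by omega)

theorem no_positive_bazaikin_family_one_general (k : ℤ)
    (a b : Fin 3 → ℤ)
    (ha : a = ![15015 * k + 39, 0, 0]) (hb : b = ![15015 * k + 55, -3, -13]) :
    (∀ σ : Equiv.Perm (Fin 3), Int.gcd (a 0 - b (σ 0)) (a 1 - b (σ 1)) = 1) ∧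
    (a 0 + a 1 + a 2 = b 0 + b 1 + b 2) ∧
    (∀ c : ℤ, -(a 1 + a 2 + 1) < 2 * c → 2 * c < -(b 1 + b 2 + 1) →
      ∃ σ : Equiv.Perm (Fin 3), ∃ ℓ : Fin 3,
        Int.gcd (a (σ 0) + a (σ 1) + 1 + 2 * c) (a (σ 2) - b ℓ) ≠ 1) := by
  subst ha hb
  have hN : 15015 ∣ 15015 * k := dvd_mul_right _ _
  refine ⟨eschenburgFree_of_dvd (by omega) (by omega), ?_, fun c h₁ h₂ => ?_⟩
  · show 15015 * k + 39 + 0 + 0 = 15015 * k + 55 + -3 + -13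
    ring
  · change -(0 + 0 + 1) < 2 * c at h₁
    change 2 * c < -(-3 + -13 + 1) at h₂
    exact gcdObstructed_of_dvd hN (by omega) (by omega)

/-- **a cohomogeneity-two family with no positively curved embedding.**
For every integer `k ≥ 0`, the triples `a = (15015k + 39, 0, 0)` and
`b = (15015k + 55, −3, −13)` satisfy the Eschenburg freeness condition and
`a₁+a₂+a₃ = b₁+b₂+b₃`, and for every integer `c` with
`−(a₂+a₃+1) < 2c < −(b₂+b₃+1)` (equivalently `0 ≤ c ≤ 7`) there are indices with
`{i,j,k'} = {1,2,3}` and `ℓ ∈ {1,2,3}` such that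
`gcd(aᵢ + aⱼ + 1 + 2c, a_{k'} − b_ℓ) ≠ 1`. -/
theorem no_positive_bazaikin_family_one (k : ℤ) (hk : 0 ≤ k)
    (a b : Fin 3 → ℤ)
    (ha : a = ![15015 * k + 39, 0, 0]) (hb : b = ![15015 * k + 55, -3, -13]) :
    (∀ σ : Equiv.Perm (Fin 3), Int.gcd (a 0 - b (σ 0)) (a 1 - b (σ 1)) = 1) ∧
    (a 0 + a 1 + a 2 = b 0 + b 1 + b 2) ∧
    (∀ c : ℤ, -(a 1 + a 2 + 1) < 2 * c → 2 * c < -(b 1 + b 2 + 1) →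
      ∃ σ : Equiv.Perm (Fin 3), ∃ ℓ : Fin 3,
        Int.gcd (a (σ 0) + a (σ 1) + 1 + 2 * c) (a (σ 2) - b ℓ) ≠ 1) :=
  no_positive_bazaikin_family_one_general k a b ha hb
end
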